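/- arXiv:1001.5223 — 2 statements merged into one kernel-verified Lean document; each statement's English description precedes it below -/
import Mathlib

section
/- Let F^{2m} be a Kaehler submanifold of a Kaehler manifold M^{2m+2l}(c) of constant holomorphic sectional curvature c. Then for all vector fields X, Y, Z tangent to F^{2m}, (∇̄_{JZ} b)(X, Y) = J((∇̄_Z b)(X, Y)), where b is the second fundamental form, J the almost complex structure, and ∇̄ the van der Waerden–Bortolotti connection. -/
/-!
An abstract framework for the geometry of a submanifold `F` of a Riemannian
manifold `M`, in the style of Kobayashi–Nomizu / Chen.  Here `C` plays the
role of the commutative ring of smooth functions on `F` (an `ℝ`-algebra),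
`T` of the module of vector fields tangent to `F`, and `N` of the module of
vector fields normal to `F`.  The structure records the ambient metric `g̃`
restricted to the tangent bundle (`g`) and to the normal bundle (`gN`), the
induced Levi-Civita connection `∇` (`nabla`), the normal connection `D`, the
second fundamental form `b` (Gauss formula `∇̃_X Y = ∇_X Y + b(X,Y)`), the
shape operators `A_ξ` (Weingarten formula `∇̃_X ξ = -A_ξ X + D_X ξ`,
characterised by `g̃(b(X,Y),ξ) = g̃(A_ξ X, Y)`), the Lie bracket, the normal
curvature tensor `R^⊥` (the curvature of `D`) and the Riemannian curvature
tensor `R` of `F`.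
-/

structure SubmanifoldData (C : Type*) (T : Type*) (N : Type*)
    [CommRing C] [Algebra ℝ C]
    [AddCommGroup T] [Module C T] [AddCommGroup N] [Module C N] where
  /-- directional derivative of smooth functions along tangent fields -/
  vder : T → C → C
  /-- the induced Riemannian metric on tangent fields (restriction of `g̃`) -/
  g : T → T → C
  /-- the restriction of the ambient metric `g̃` to normal fields -/
  gN : N → N → C
  /-- the Levi-Civita connection `∇` of the induced metric on `F` -/
  nabla : T → T → T
  /-- the normal connection `D` -/
  D : T → N → N
  /-- the second fundamental form `b` -/
  b : T → T → N
  /-- the shape operators: `A ξ` is the second fundamental tensor `A_ξ` -/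
  A : N → T → T
  /-- the Lie bracket of tangent vector fields -/
  bracket : T → T → T
  /-- the normal curvature tensor `R^⊥` (curvature of `D`) -/
  Rperp : T → T → N → N
  /-- the Riemannian curvature tensor `R` of `F` -/
  R : T → T → T → T
  g_symm : ∀ X Y, g X Y = g Y X
  gN_symm : ∀ ξ η, gN ξ η = gN η ξ
  g_add_left : ∀ X Y Z, g (X + Y) Z = g X Z + g Y Z
  g_smul_left : ∀ (f : C) (X Y : T), g (f • X) Y = f * g X Y
  gN_add_left : ∀ ξ η ζ, gN (ξ + η) ζ = gN ξ ζ + gN η ζ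
  gN_smul_left : ∀ (f : C) (ξ η : N), gN (f • ξ) η = f * gN ξ η
  g_nondeg : ∀ X, (∀ Y, g X Y = 0) → X = 0
  gN_nondeg : ∀ ξ, (∀ η, gN ξ η = 0) → ξ = 0
  /-- the second fundamental form is symmetric -/
  b_symm : ∀ X Y, b X Y = b Y X
  b_add_left : ∀ X Y Z, b (X + Y) Z = b X Z + b Y Z
  b_smul_left : ∀ (f : C) (X Y : T), b (f • X) Y = f • b X Y
  /-- relation between the second fundamental form and the shape operators:
  `g̃(b(X,Y), ξ) = g̃(A_ξ X, Y)` -/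
  shape : ∀ X Y ξ, gN (b X Y) ξ = g (A ξ X) Y
  nabla_add : ∀ Z X Y, nabla Z (X + Y) = nabla Z X + nabla Z Y
  nabla_smul : ∀ Z (f : C) X, nabla Z (f • X) = vder Z f • X + f • nabla Z X
  D_add : ∀ Z ξ η, D Z (ξ + η) = D Z ξ + D Z η
  D_smul : ∀ Z (f : C) ξ, D Z (f • ξ) = vder Z f • ξ + f • D Z ξ
  /-- `∇` is metric: `Z g(X,Y) = g(∇_Z X, Y) + g(X, ∇_Z Y)` -/
  nabla_metric : ∀ Z X Y, vder Z (g X Y) = g (nabla Z X) Y + g X (nabla Z Y)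
  /-- `D` is metric: `Z g̃(ξ,η) = g̃(D_Z ξ, η) + g̃(ξ, D_Z η)` -/
  D_metric : ∀ Z ξ η, vder Z (gN ξ η) = gN (D Z ξ) η + gN ξ (D Z η)
  /-- `∇` is torsion free -/
  torsion_free : ∀ X Y, nabla X Y - nabla Y X = bracket X Y
  /-- `R^⊥` is the curvature tensor of the normal connection `D` -/
  Rperp_def : ∀ X Y ξ, Rperp X Y ξ = D X (D Y ξ) - D Y (D X ξ) - D (bracket X Y) ξ
  /-- `R` is the curvature tensor of `∇` -/
  R_def : ∀ X Y Z, R X Y Z = nabla X (nabla Y Z) - nabla Y (nabla X Z) - nabla (bracket X Y) Z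

namespace SubmanifoldData

variable {C T N : Type*} [CommRing C] [Algebra ℝ C]
    [AddCommGroup T] [Module C T] [AddCommGroup N] [Module C N]
    (geo : SubmanifoldData C T N)

/-- The covariant derivative `(∇̄_Z b)(X,Y)` of the second fundamental form
along the van der Waerden–Bortolotti connection `∇̄ = ∇ ⊕ D`:
`(∇̄_Z b)(X,Y) = D_Z(b(X,Y)) - b(∇_Z X, Y) - b(X, ∇_Z Y)`. -/
def nablaB (Z X Y : T) : N :=
  geo.D Z (geo.b X Y) - geo.b (geo.nabla Z X) Y - geo.b X (geo.nabla Z Y)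

/-- The covariant derivative `(∇̄_Z A)_ξ X` of the shape operator along the
van der Waerden–Bortolotti connection `∇̄ = ∇ ⊕ D`:
`(∇̄_Z A)_ξ X = ∇_Z(A_ξ X) - A_ξ(∇_Z X) - A_{D_Z ξ} X`. -/
def nablaA (Z : T) (ξ : N) (X : T) : T :=
  geo.nabla Z (geo.A ξ X) - geo.A ξ (geo.nabla Z X) - geo.A (geo.D Z ξ) X

/-- The covariant derivative `(∇̄_Z R^⊥)(X,Y)ξ` of the normal curvature
tensor along the van der Waerden–Bortolotti connection `∇̄ = ∇ ⊕ D`. -/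
def nablaRperp (Z X Y : T) (ξ : N) : N :=
  geo.D Z (geo.Rperp X Y ξ) - geo.Rperp (geo.nabla Z X) Y ξ
    - geo.Rperp X (geo.nabla Z Y) ξ - geo.Rperp X Y (geo.D Z ξ)

/-- The covariant derivative `(∇_W R)(X,Y)Z` of the Riemannian curvature
tensor of `F` along the Levi-Civita connection `∇` of `F`. -/
def nablaR (W X Y Z : T) : T :=
  geo.nabla W (geo.R X Y Z) - geo.R (geo.nabla W X) Y Z
    - geo.R X (geo.nabla W Y) Z - geo.R X Y (geo.nabla W Z)

end SubmanifoldData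

/-- A Kaehler submanifold `F^{2m}` of a Kaehler manifold `M^{2m+2l}`:
the almost complex structure `J` of the ambient manifold preserves both the
tangent bundle (`JT`) and the normal bundle (`JN`) of `F`; `J² = -I`, the
metric is Hermitian, and `∇̃J = 0` induces (via the Gauss and Weingarten
formulas) the compatibilities `∇_X(JY) = J∇_X Y`, `b(X,JY) = J b(X,Y)`,
`A_{Jξ} = J A_ξ` and `D_X(Jξ) = J D_X ξ`. -/
structure KaehlerSubmanifoldData (C : Type*) (T : Type*) (N : Type*)
    [CommRing C] [Algebra ℝ C]
    [AddCommGroup T] [Module C T] [AddCommGroup N] [Module C N]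
    extends SubmanifoldData C T N where
  /-- the almost complex structure `J` acting on tangent fields -/
  JT : T → T
  /-- the almost complex structure `J` acting on normal fields -/
  JN : N → N
  JT_sq : ∀ X, JT (JT X) = -X
  JN_sq : ∀ ξ, JN (JN ξ) = -ξ
  /-- the metric is Hermitian: `g̃(JX, JY) = g̃(X, Y)` -/
  g_J : ∀ X Y, g (JT X) (JT Y) = g X Y
  /-- the metric is Hermitian: `g̃(Jξ, Jη) = g̃(ξ, η)` -/
  gN_J : ∀ ξ η, gN (JN ξ) (JN η) = gN ξ η
  /-- `J` is parallel: `∇_X (JY) = J (∇_X Y)` -/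
  nabla_J : ∀ X Y, nabla X (JT Y) = JT (nabla X Y)
  /-- `b(X, JY) = J b(X, Y)` -/
  b_J : ∀ X Y, b X (JT Y) = JN (b X Y)
  /-- `A_{Jξ} X = J (A_ξ X)` -/
  A_J : ∀ ξ X, A (JN ξ) X = JT (A ξ X)
  /-- `D_X (Jξ) = J (D_X ξ)` -/
  D_J : ∀ X ξ, D X (JN ξ) = JN (D X ξ)

namespace KaehlerSubmanifoldData

variable {C T N : Type*} [CommRing C] [Algebra ℝ C]
    [AddCommGroup T] [Module C T] [AddCommGroup N] [Module C N]
    (geo : KaehlerSubmanifoldData C T N)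

abbrev nablaB := geo.toSubmanifoldData.nablaB
abbrev nablaA := geo.toSubmanifoldData.nablaA
abbrev nablaRperp := geo.toSubmanifoldData.nablaRperp
abbrev nablaR := geo.toSubmanifoldData.nablaR

end KaehlerSubmanifoldData

/-- A Kaehler submanifold `F^{2m}` of a Kaehler manifold `M^{2m+2l}(c)` of
constant holomorphic sectional curvature `c`.  The ambient curvature tensor
is `R̃(X,Y)Z = (c/4)(g̃(Y,Z)X - g̃(X,Z)Y + g̃(JY,Z)JX - g̃(JX,Z)JY +
2 g̃(X,JY) JZ)`; substituted into the fundamental equations of Gauss,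
Peterson–Codazzi and Ricci of the submanifold this yields the three axioms
`gauss_eq`, `codazzi_eq` and `ricci_eq` below (for the Codazzi equation note
that `R̃(X,Y)Z` is tangent to `F` whenever `X, Y, Z` are, so its normal
component vanishes). -/
structure KaehlerSpaceFormSubmanifold (C : Type*) (T : Type*) (N : Type*)
    [CommRing C] [Algebra ℝ C]
    [AddCommGroup T] [Module C T] [AddCommGroup N] [Module C N]
    extends KaehlerSubmanifoldData C T N where
  /-- the constant holomorphic sectional curvature of the ambient manifold -/
  c : ℝ
  /-- the Gauss equation, with the ambient curvature given by constant
  holomorphic sectional curvature `c`: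
  `R̃(X,Y,Z,W) = R(X,Y,Z,W) + g̃(b(X,Z),b(Y,W)) - g̃(b(X,W),b(Y,Z))`. -/
  gauss_eq : ∀ X Y Z W, g (R X Y Z) W =
      (c / 4) • (g Y Z * g X W - g X Z * g Y W + g (JT Y) Z * g (JT X) W
        - g (JT X) Z * g (JT Y) W + 2 * (g X (JT Y) * g (JT Z) W))
      - gN (b X Z) (b Y W) + gN (b X W) (b Y Z)
  /-- the Peterson–Codazzi equation: since `R̃(X,Y)Z` has no normal
  component, `(∇̄_X b)(Y,Z) = (∇̄_Y b)(X,Z)`. -/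
  codazzi_eq : ∀ X Y Z,
      D X (b Y Z) - b (nabla X Y) Z - b Y (nabla X Z)
        = D Y (b X Z) - b (nabla Y X) Z - b X (nabla Y Z)
  /-- the Ricci equation, with the ambient curvature given by constant
  holomorphic sectional curvature `c`:
  `R^⊥(X,Y,ξ,η) = (c/2) g̃(X,JY) g̃(Jξ,η) + g̃([A_ξ,A_η]X, Y)`. -/
  ricci_eq : ∀ X Y ξ η, gN (Rperp X Y ξ) η =
      (c / 2) • (g X (JT Y) * gN (JN ξ) η)
        + g (A ξ (A η X) - A η (A ξ X)) Y

namespace KaehlerSpaceFormSubmanifold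

variable {C T N : Type*} [CommRing C] [Algebra ℝ C]
    [AddCommGroup T] [Module C T] [AddCommGroup N] [Module C N]
    (geo : KaehlerSpaceFormSubmanifold C T N)

abbrev nablaB := geo.toSubmanifoldData.nablaB
abbrev nablaA := geo.toSubmanifoldData.nablaA
abbrev nablaRperp := geo.toSubmanifoldData.nablaRperp
abbrev nablaR := geo.toSubmanifoldData.nablaR

end KaehlerSpaceFormSubmanifold


namespace KaehlerSpaceFormSubmanifold

variable {C T N : Type*} [CommRing C] [Algebra ℝ C]
    [AddCommGroup T] [Module C T] [AddCommGroup N] [Module C N]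
    (geo : KaehlerSpaceFormSubmanifold C T N)

lemma gN_add_right' (ξ η ζ : N) : geo.gN ξ (η + ζ) = geo.gN ξ η + geo.gN ξ ζ := by
  rw [geo.gN_symm, geo.gN_add_left, geo.gN_symm η ξ, geo.gN_symm ζ ξ]

lemma gN_neg_left' (ξ η : N) : geo.gN (-ξ) η = -geo.gN ξ η := by
  have h := geo.gN_smul_left (-1 : C) ξ η
  rwa [neg_one_smul, neg_one_mul] at h

lemma gN_JN_left' (ξ η : N) : geo.gN (geo.JN ξ) η = -geo.gN ξ (geo.JN η) := by
  have hη : η = -(geo.JN (geo.JN η)) := by rw [geo.JN_sq, neg_neg]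
  calc geo.gN (geo.JN ξ) η = geo.gN (geo.JN ξ) (-(geo.JN (geo.JN η))) := by rw [← hη]
    _ = geo.gN (-(geo.JN (geo.JN η))) (geo.JN ξ) := by rw [geo.gN_symm]
    _ = -geo.gN (geo.JN (geo.JN η)) (geo.JN ξ) := geo.gN_neg_left' _ _
    _ = -geo.gN (geo.JN η) ξ := by rw [geo.gN_J]
    _ = -geo.gN ξ (geo.JN η) := by rw [geo.gN_symm]

lemma JN_add' (ξ η : N) : geo.JN (ξ + η) = geo.JN ξ + geo.JN η := by
  have key : ∀ ζ, geo.gN (geo.JN (ξ + η) - (geo.JN ξ + geo.JN η)) ζ = 0 := by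
    intro ζ
    have : geo.JN (ξ + η) - (geo.JN ξ + geo.JN η)
        = geo.JN (ξ + η) + -(geo.JN ξ) + -(geo.JN η) := by abel
    rw [this, geo.gN_add_left, geo.gN_add_left, geo.gN_neg_left', geo.gN_neg_left',
      geo.gN_JN_left' (ξ + η), geo.gN_JN_left' ξ, geo.gN_JN_left' η, geo.gN_add_left]
    ring
  have := geo.gN_nondeg _ key
  linear_combination (norm := abel) this

lemma JN_neg' (ξ : N) : geo.JN (-ξ) = -geo.JN ξ := by
  have h0 : geo.JN (0 : N) = 0 := by
    have := geo.JN_add' (0 : N) 0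
    simpa using this
  have := geo.JN_add' ξ (-ξ)
  rw [add_neg_cancel, h0] at this
  exact eq_neg_of_add_eq_zero_right this.symm

end KaehlerSpaceFormSubmanifold

/-- **Lemma 3, (2.6).** Let `F^{2m}` be a Kaehler submanifold of a Kaehler
manifold `M^{2m+2l}(c)` of constant holomorphic sectional curvature `c`.
Then for all vector fields `X, Y, Z` tangent to `F^{2m}`,
`(∇̄_{JZ} b)(X, Y) = J((∇̄_Z b)(X, Y))`. -/
theorem nablaB_J_direction
    {C T N : Type*} [CommRing C] [Algebra ℝ C]
    [AddCommGroup T] [Module C T] [AddCommGroup N] [Module C N]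
    (geo : KaehlerSpaceFormSubmanifold C T N) :
    ∀ X Y Z : T,
      geo.nablaB (geo.JT Z) X Y = geo.JN (geo.nablaB Z X Y) := by
  have JN_sub3 : ∀ a b c : N, geo.JN (a - b - c) = geo.JN a - geo.JN b - geo.JN c := by
    intro a b c
    have : a - b - c = a + -b + -c := by abel
    rw [this, geo.JN_add', geo.JN_add', geo.JN_neg', geo.JN_neg']
    abel
  have Jlast : ∀ Z X Y : T, geo.nablaB Z X (geo.JT Y) = geo.JN (geo.nablaB Z X Y) := by
    intro Z X Y
    unfold KaehlerSpaceFormSubmanifold.nablaB SubmanifoldData.nablaB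
    rw [geo.nabla_J, geo.b_J X Y, geo.b_J (geo.nabla Z X) Y, geo.b_J X (geo.nabla Z Y),
      geo.D_J, JN_sub3]
  have swap12 : ∀ X Y Z : T, geo.nablaB X Y Z = geo.nablaB Y X Z := by
    intro X Y Z
    unfold KaehlerSpaceFormSubmanifold.nablaB SubmanifoldData.nablaB
    exact geo.codazzi_eq X Y Z
  have swap23 : ∀ X Y Z : T, geo.nablaB X Y Z = geo.nablaB X Z Y := by
    intro X Y Z
    unfold KaehlerSpaceFormSubmanifold.nablaB SubmanifoldData.nablaB
    rw [geo.toSubmanifoldData.b_symm Y Z, geo.toSubmanifoldData.b_symm (geo.nabla X Y) Z,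
      geo.toSubmanifoldData.b_symm Y (geo.nabla X Z)]
    abel
  intro X Y Z
  calc geo.nablaB (geo.JT Z) X Y = geo.nablaB X (geo.JT Z) Y := swap12 _ _ _
    _ = geo.nablaB X Y (geo.JT Z) := swap23 _ _ _
    _ = geo.JN (geo.nablaB X Y Z) := Jlast _ _ _
    _ = geo.JN (geo.nablaB Z X Y) := by rw [swap23 X Y Z, swap12 X Z Y]
end

section
/- Let F^{2m} be a Kaehler submanifold of a Kaehler manifold M^{2m+2l}(c) of constant holomorphic sectional curvature c. Then for every vector field Z tangent to F^{2m} and every vector field ξ normal to F^{2m}, (∇̄_{JZ} A)_ξ = −J ∘ (∇̄_Z A)_ξ, where A_ξ is the shape operator, J the almost complex structure, and ∇̄ the van der Waerden–Bortolotti connection. -/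
section Aux

variable {C T N : Type*} [CommRing C] [Algebra ℝ C]
    [AddCommGroup T] [Module C T] [AddCommGroup N] [Module C N]
    (geo : KaehlerSpaceFormSubmanifold C T N)

private lemma aux_g_sub_left (X Y Z : T) :
    geo.g (X - Y) Z = geo.g X Z - geo.g Y Z := by
  have h := geo.g_add_left (X - Y) Y Z
  rw [sub_add_cancel] at h
  linear_combination -h

private lemma aux_gN_sub_left (ξ η ζ : N) :
    geo.gN (ξ - η) ζ = geo.gN ξ ζ - geo.gN η ζ := by
  have h := geo.gN_add_left (ξ - η) η ζ
  rw [sub_add_cancel] at h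
  linear_combination -h

private lemma aux_g_zero_left (Z : T) : geo.g 0 Z = 0 := by
  have h := geo.g_add_left 0 0 Z
  rw [add_zero] at h
  linear_combination -h

private lemma aux_g_neg_left (X Z : T) : geo.g (-X) Z = -geo.g X Z := by
  have h := aux_g_sub_left geo 0 X Z
  rw [zero_sub] at h
  rw [h, aux_g_zero_left geo Z, zero_sub]

private lemma aux_g_skew (X Y : T) :
    geo.g (geo.JT X) Y = -geo.g X (geo.JT Y) := by
  have h := geo.g_J (geo.JT X) Y
  rw [geo.JT_sq, aux_g_neg_left geo] at h
  exact h.symm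

private lemma aux_gN_zero_left (ζ : N) : geo.gN 0 ζ = 0 := by
  have h := geo.gN_add_left 0 0 ζ
  rw [add_zero] at h
  linear_combination -h

private lemma aux_gN_neg_left (ξ ζ : N) : geo.gN (-ξ) ζ = -geo.gN ξ ζ := by
  have h := aux_gN_sub_left geo 0 ξ ζ
  rw [zero_sub] at h
  rw [h, aux_gN_zero_left geo ζ, zero_sub]

private lemma aux_gN_skew (ξ η : N) :
    geo.gN (geo.JN ξ) η = -geo.gN ξ (geo.JN η) := by
  have h := geo.gN_J (geo.JN ξ) η
  rw [geo.JN_sq, aux_gN_neg_left geo] at h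
  exact h.symm

/-- `JN` commutes with subtraction. -/
private lemma aux_JN_sub (ξ η : N) :
    geo.JN (ξ - η) = geo.JN ξ - geo.JN η := by
  refine sub_eq_zero.mp (geo.gN_nondeg ((geo.JN (ξ - η)) - (geo.JN ξ - geo.JN η)) ?_)
  intro ζ
  rw [aux_gN_sub_left geo, aux_gN_sub_left geo, aux_gN_skew geo,
    aux_gN_skew geo, aux_gN_skew geo, aux_gN_sub_left geo]
  ring

/-- pairing between `∇̄b` and `∇̄A`:
`g̃((∇̄_Z b)(X,Y), ξ) = g((∇̄_Z A)_ξ X, Y)`. -/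
private lemma aux_pairing (Z X Y : T) (ξ : N) :
    geo.gN (geo.nablaB Z X Y) ξ = geo.g (geo.nablaA Z ξ X) Y := by
  simp only [KaehlerSpaceFormSubmanifold.nablaA, KaehlerSpaceFormSubmanifold.nablaB, KaehlerSubmanifoldData.nablaA, KaehlerSubmanifoldData.nablaB, SubmanifoldData.nablaB, SubmanifoldData.nablaA]
  rw [aux_gN_sub_left geo, aux_gN_sub_left geo,
    aux_g_sub_left geo, aux_g_sub_left geo]
  have hD := geo.D_metric Z (geo.b X Y) ξ
  have hg := geo.nabla_metric Z (geo.A ξ X) Y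
  rw [geo.shape X Y ξ] at hD
  rw [geo.shape, geo.shape]
  -- hD : vder Z (g (A ξ X) Y) = gN (D Z (b X Y)) ξ + gN (b X Y) (D Z ξ)
  -- hg : vder Z (g (A ξ X) Y) = g (nabla Z (A ξ X)) Y + g (A ξ X) (nabla Z Y)
  have hshape : geo.gN (geo.b X Y) (geo.D Z ξ) = geo.g (geo.A (geo.D Z ξ) X) Y :=
    geo.shape X Y (geo.D Z ξ)
  linear_combination hg - hD - hshape

/-- symmetry of `∇̄b` in its first two arguments (Peterson–Codazzi). -/
private lemma aux_nablaB_symm (Z X Y : T) :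
    geo.nablaB Z X Y = geo.nablaB X Z Y := by
  simp only [KaehlerSpaceFormSubmanifold.nablaB, KaehlerSubmanifoldData.nablaB, SubmanifoldData.nablaB]
  have h := geo.codazzi_eq Z X Y
  rw [h]

/-- `∇̄b` is `J`-linear in its second argument. -/
private lemma aux_nablaB_J2 (Z X Y : T) :
    geo.nablaB Z (geo.JT X) Y = geo.JN (geo.nablaB Z X Y) := by
  simp only [KaehlerSpaceFormSubmanifold.nablaB, KaehlerSubmanifoldData.nablaB, SubmanifoldData.nablaB]
  have hb1 : geo.b (geo.JT X) Y = geo.JN (geo.b X Y) := by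
    rw [geo.b_symm, geo.b_J, geo.b_symm]
  have hb2 : geo.b (geo.JT (geo.nabla Z X)) Y = geo.JN (geo.b (geo.nabla Z X) Y) := by
    rw [geo.b_symm, geo.b_J, geo.b_symm]
  have hb3 : geo.b (geo.JT X) (geo.nabla Z Y) = geo.JN (geo.b X (geo.nabla Z Y)) := by
    rw [geo.b_symm, geo.b_J, geo.b_symm]
  rw [hb1, geo.nabla_J, hb2, hb3, geo.D_J, aux_JN_sub geo, aux_JN_sub geo]

theorem nablaA_J_direction_aux :
    ∀ (Z : T) (ξ : N) (Y : T),
      geo.nablaA (geo.JT Z) ξ Y = -geo.JT (geo.nablaA Z ξ Y) := by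
  intro Z ξ Y
  refine sub_eq_zero.mp (geo.g_nondeg
    (geo.nablaA (geo.JT Z) ξ Y - -geo.JT (geo.nablaA Z ξ Y)) ?_)
  intro W
  rw [aux_g_sub_left geo]
  have h1 : geo.g (geo.nablaA (geo.JT Z) ξ Y) W
      = geo.gN (geo.JN (geo.nablaB Z Y W)) ξ := by
    rw [← aux_pairing geo, aux_nablaB_symm geo, aux_nablaB_J2 geo,
      aux_nablaB_symm geo]
  have h2 : geo.g (-geo.JT (geo.nablaA Z ξ Y)) W
      = geo.gN (geo.JN (geo.nablaB Z Y W)) ξ := by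
    rw [aux_g_neg_left geo, aux_g_skew geo, neg_neg, ← aux_pairing geo Z Y (geo.JT W) ξ]
    -- need nablaB Z Y (JT W) = JN (nablaB Z Y W)
    have h3 : geo.nablaB Z Y (geo.JT W) = geo.JN (geo.nablaB Z Y W) := by
      simp only [KaehlerSpaceFormSubmanifold.nablaB, KaehlerSubmanifoldData.nablaB, SubmanifoldData.nablaB]
      rw [geo.b_J, geo.nabla_J, geo.b_J, geo.D_J, geo.b_J, aux_JN_sub geo,
        aux_JN_sub geo]
    rw [h3]
  rw [h1, h2, sub_self]

end Aux

/-- **Lemma 3, (2.7).** Let `F^{2m}` be a Kaehler submanifold of a Kaehler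
manifold `M^{2m+2l}(c)` of constant holomorphic sectional curvature `c`.
Then for every vector field `Z` tangent to `F^{2m}` and every vector field
`ξ` normal to `F^{2m}`, `(∇̄_{JZ} A)_ξ = -J ∘ (∇̄_Z A)_ξ`. -/
theorem nablaA_J_direction
    {C T N : Type*} [CommRing C] [Algebra ℝ C]
    [AddCommGroup T] [Module C T] [AddCommGroup N] [Module C N]
    (geo : KaehlerSpaceFormSubmanifold C T N) :
    ∀ (Z : T) (ξ : N) (Y : T),
      geo.nablaA (geo.JT Z) ξ Y = -geo.JT (geo.nablaA Z ξ Y) :=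
  nablaA_J_direction_aux geo
end
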